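/- Let (α_k)_{k≥1} be real numbers with α_1 = 1, 0 < α_k < 1 for all k ≥ 2, and α_{k+1} ≤ 2/(1 + √(1 + 4/α_k²)) for all k ≥ 1. Define Γ_1 = 1 and Γ_k = (1 − α_k)Γ_{k−1} for k ≥ 2. Then for every N ≥ 1 and all nonnegative constants C_1, C_2, one has (Σ_{k=1}^N Γ_k^{−1})^{−1}·C_1 + (Σ_{k=1}^N Γ_N/Γ_k)^{−1}·C_2 ≤ C_1/N + 3C_2/(N + 2); in particular the left-hand side is O(1/N). -/

import Mathlib

/-!
The recurrence forces `α k ≤ 2 / (k + 1)`, since `x ↦ 2 / (1 + √(1 + 4 / x²))` is increasing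
and sends `2 / (k + 1)` below `2 / (k + 2)`. As `0 < Γ k ≤ 1`, the first sum is at least `N`.
The bound on `α` makes `k (k + 1) Γ k` nondecreasing, so `Γ N / Γ k ≥ k (k + 1) / (N (N + 1))`,
and summing gives `(N + 2) / 3` as a lower bound for the second sum.
-/

open Finset

lemma two_div_one_add_sqrt_le {a t : ℝ} (ha : 0 < a) (ht : 0 < t) (hat : a ≤ 2 / t) :
    2 / (1 + √(1 + 4 / a ^ 2)) ≤ 2 / (t + 1) := by
  have hsq : t ^ 2 ≤ 4 / a ^ 2 := by
    rw [le_div_iff₀ (by positivity)]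
    have : t * a ≤ 2 := by rwa [le_div_iff₀ ht, mul_comm] at hat
    nlinarith [mul_pos ht ha]
  have hsqrt : t ≤ √(1 + 4 / a ^ 2) := Real.le_sqrt_of_sq_le (by linarith)
  exact div_le_div_of_nonneg_left zero_le_two (by positivity) (by linarith)

lemma sum_Icc_mul_succ (N : ℕ) :
    ∑ k ∈ Icc 1 N, (k : ℝ) * (k + 1) = N * (N + 1) * (N + 2) / 3 := by
  induction N with
  | zero => simp
  | succ n ih =>
    rw [sum_Icc_succ_top (by omega), ih]
    push_cast
    ring

namespace AccelWeights

variable {α Γ : ℕ → ℝ}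

lemma alpha_le_two_div (hα1 : α 1 = 1) (hαpos : ∀ k ≥ 2, 0 < α k)
    (hrec : ∀ k ≥ 1, α (k + 1) ≤ 2 / (1 + √(1 + 4 / α k ^ 2))) :
    ∀ k ≥ 1, α k ≤ 2 / (k + 1) := by
  intro k hk
  induction k, hk using Nat.le_induction with
  | base => norm_num [hα1]
  | succ n hn ih =>
    have hαn : 0 < α n := by
      rcases hn.eq_or_lt with rfl | hn
      · simp [hα1]
      · exact hαpos n hn
    calc α (n + 1) ≤ 2 / (1 + √(1 + 4 / α n ^ 2)) := hrec n hn
      _ ≤ 2 / ((n + 1) + 1) := two_div_one_add_sqrt_le hαn (by positivity) ih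
      _ = 2 / ((n + 1 : ℕ) + 1) := by push_cast; ring_nf

lemma gamma_succ (hΓ : ∀ k ≥ 2, Γ k = (1 - α k) * Γ (k - 1)) (n : ℕ) (hn : 1 ≤ n) :
    Γ (n + 1) = (1 - α (n + 1)) * Γ n :=
  hΓ (n + 1) (by omega)

variable (hΓ1 : Γ 1 = 1) (hΓ : ∀ n ≥ 1, Γ (n + 1) = (1 - α (n + 1)) * Γ n)
include hΓ1 hΓ

lemma gamma_pos (hαlt : ∀ k ≥ 2, α k < 1) : ∀ k ≥ 1, 0 < Γ k := by
  intro k hk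
  induction k, hk using Nat.le_induction with
  | base => simp [hΓ1]
  | succ n hn ih =>
    rw [hΓ n hn]
    exact mul_pos (by linarith [hαlt (n + 1) (by omega)]) ih

lemma gamma_le_one (hαpos : ∀ k ≥ 2, 0 < α k) (hαlt : ∀ k ≥ 2, α k < 1) :
    ∀ k ≥ 1, Γ k ≤ 1 := by
  intro k hk
  induction k, hk using Nat.le_induction with
  | base => simp [hΓ1]
  | succ n hn ih =>
    have hΓn := gamma_pos hΓ1 hΓ hαlt n hn
    rw [hΓ n hn]
    nlinarith [hαpos (n + 1) (by omega), hαlt (n + 1) (by omega)]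

lemma monotoneOn_mul_succ_mul_gamma (hαlt : ∀ k ≥ 2, α k < 1)
    (hαle : ∀ k ≥ 1, α k ≤ 2 / (k + 1)) :
    MonotoneOn (fun k : ℕ ↦ (k : ℝ) * (k + 1) * Γ k) (Set.Ici 1) := by
  refine monotoneOn_nat_Ici_of_le_succ fun n hn ↦ ?_
  have hΓn := gamma_pos hΓ1 hΓ hαlt n hn
  have hα : (n + 2 : ℝ) * α (n + 1) ≤ 2 := by
    have := hαle (n + 1) (by omega)
    rw [le_div_iff₀ (by positivity)] at this
    push_cast at this
    linarith
  -- `(n + 1) (n + 2) (1 - α (n + 1)) ≥ (n + 1) (n + 2) (1 - 2 / (n + 2)) = n (n + 1)`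
  simp only [hΓ n hn]
  push_cast
  nlinarith [mul_nonneg (by positivity : (0 : ℝ) ≤ n + 1)
    (mul_nonneg (sub_nonneg.2 hα) hΓn.le)]

lemma natCast_le_sum_inv (hαpos : ∀ k ≥ 2, 0 < α k) (hαlt : ∀ k ≥ 2, α k < 1) (N : ℕ) :
    (N : ℝ) ≤ ∑ k ∈ Icc 1 N, (Γ k)⁻¹ := by
  simpa using card_nsmul_le_sum (Icc 1 N) (fun k ↦ (Γ k)⁻¹) 1 fun k hk ↦
    (one_le_inv₀ (gamma_pos hΓ1 hΓ hαlt k (mem_Icc.1 hk).1)).2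
      (gamma_le_one hΓ1 hΓ hαpos hαlt k (mem_Icc.1 hk).1)

lemma add_two_div_three_le_sum_div (hαlt : ∀ k ≥ 2, α k < 1)
    (hαle : ∀ k ≥ 1, α k ≤ 2 / (k + 1)) (N : ℕ) (hN : 1 ≤ N) :
    ((N : ℝ) + 2) / 3 ≤ ∑ k ∈ Icc 1 N, Γ N / Γ k := by
  have hmono := monotoneOn_mul_succ_mul_gamma hΓ1 hΓ hαlt hαle
  calc ((N : ℝ) + 2) / 3 = ∑ k ∈ Icc 1 N, (k : ℝ) * (k + 1) / (N * (N + 1)) := by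
        rw [← sum_div, sum_Icc_mul_succ]
        field_simp
    _ ≤ ∑ k ∈ Icc 1 N, Γ N / Γ k := sum_le_sum fun k hk ↦ by
        obtain ⟨hk1, hkN⟩ := mem_Icc.1 hk
        rw [div_le_div_iff₀ (by positivity) (gamma_pos hΓ1 hΓ hαlt k hk1)]
        linarith [hmono (Set.mem_Ici.2 hk1) (Set.mem_Ici.2 (hk1.trans hkN)) hkN]

end AccelWeights

theorem stmt_8 (α Γ : ℕ → ℝ)
    (hα1 : α 1 = 1)
    (hαpos : ∀ k ≥ 2, 0 < α k) (hαlt : ∀ k ≥ 2, α k < 1)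
    (hrec : ∀ k ≥ 1, α (k + 1) ≤ 2 / (1 + Real.sqrt (1 + 4 / (α k) ^ 2)))
    (hΓ1 : Γ 1 = 1) (hΓ : ∀ k ≥ 2, Γ k = (1 - α k) * Γ (k - 1)) :
    ∀ N ≥ 1, ∀ C₁ C₂ : ℝ, 0 ≤ C₁ → 0 ≤ C₂ →
      (∑ k ∈ Finset.Icc 1 N, (Γ k)⁻¹)⁻¹ * C₁ + (∑ k ∈ Finset.Icc 1 N, Γ N / Γ k)⁻¹ * C₂ ≤
        C₁ / (N : ℝ) + 3 * C₂ / ((N : ℝ) + 2) := by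
  intro N hN C₁ C₂ hC₁ hC₂
  have hΓ' := AccelWeights.gamma_succ hΓ
  have hNpos : (0 : ℝ) < N := by exact_mod_cast hN
  have hS₁ := AccelWeights.natCast_le_sum_inv hΓ1 hΓ' hαpos hαlt N
  have hS₂ := AccelWeights.add_two_div_three_le_sum_div hΓ1 hΓ' hαlt
    (AccelWeights.alpha_le_two_div hα1 hαpos hrec) N hN
  calc (∑ k ∈ Icc 1 N, (Γ k)⁻¹)⁻¹ * C₁ + (∑ k ∈ Icc 1 N, Γ N / Γ k)⁻¹ * C₂
      ≤ (N : ℝ)⁻¹ * C₁ + (((N : ℝ) + 2) / 3)⁻¹ * C₂ := by gcongr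
    _ = C₁ / N + 3 * C₂ / (N + 2) := by field_simp
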